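/- With the Hill Lemma setup (filtration (X_α | α≤σ) of X, chosen <κ-generated subobjects A_α ⊆ X with X_{α+1} = X_α + A_α, ℓ(S) = Σ_{α∈S} A_α, and S ⊆ σ called closed if every α ∈ S satisfies X_α ∩ A_α ⊆ Σ_{γ∈S, γ<α} A_γ): if S ⊆ σ is closed, then ℓ(S) ∩ X_α = ℓ(S ∩ α) for each α < σ. -/

import Mathlib

/-!
The inclusion `ℓ(S ∩ β) ≤ ℓ(S) ⊓ X_β` holds because `A_γ ≤ X_{γ+1}`. Conversely, `ℓ(S)` is the
directed union of the `ℓ(S ∩ [0, δ])`, so by upper continuity it suffices to show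
`ℓ(S ∩ [0, δ]) ⊓ X_β ≤ ℓ(S ∩ β)`, by well-founded induction on `δ`. For `δ ≥ β`, modularity
(as `ℓ(S ∩ δ) ≤ X_δ`) and closedness of `S` give `ℓ(S ∩ [0, δ]) ⊓ X_δ ≤ ℓ(S ∩ δ)`, and
`ℓ(S ∩ δ)` is the directed union of the `ℓ(S ∩ [0, δ'])`, `δ' < δ`, to which the induction
hypothesis applies after one more use of upper continuity.

Subobject lattices of an abelian category are modular, and upper continuous under AB5; both
are proved with refinements, i.e. by covering generalized elements by epimorphisms.
-/

open CategoryTheory CategoryTheory.Limits ZeroObject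

universe v u

namespace Paper

section Defs

variable {C : Type u} [Category.{v} C]

/-- A preorder `J` is `κ`-directed if every subset of cardinality `< κ`
has an upper bound in `J`. -/
def IsKappaDirected (κ : Cardinal.{v}) (J : Type v) [Preorder J] : Prop :=
  ∀ s : Set J, Cardinal.mk s < κ → ∃ j : J, ∀ i ∈ s, i ≤ j

/-- An object `X` is `< κ`-presentable if `Hom(X, -)` preserves `κ`-directed colimits. -/
def KPresentable (κ : Cardinal.{v}) (X : C) : Prop :=
  ∀ (J : Type v) [Preorder J], IsKappaDirected κ J →
    ∀ D : J ⥤ C, PreservesColimit D (coyoneda.obj (Opposite.op X))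

/-- An object `X` is `< κ`-generated if `Hom(X, -)` preserves `κ`-directed colimits
of systems of monomorphisms. -/
def KGenerated (κ : Cardinal.{v}) (X : C) : Prop :=
  ∀ (J : Type v) [Preorder J], IsKappaDirected κ J →
    ∀ D : J ⥤ C, (∀ (i j : J) (h : i ≤ j), Mono (D.map (homOfLE h))) →
      PreservesColimit D (coyoneda.obj (Opposite.op X))

variable (C)

/-- A generating set of objects: every object is an epimorphic image of a coproduct
of objects from `S`. -/
def IsGeneratingSet [HasColimits C] (S : Set C) : Prop :=
  ∀ X : C, ∃ (ι : Type v) (f : ι → C) (p : (∐ f) ⟶ X), (∀ i, f i ∈ S) ∧ Epi p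

/-- The category is locally `< κ`-presentable: it has a generating set consisting of
`< κ`-presentable objects. -/
def LocallyKPresentable [HasColimits C] (κ : Cardinal.{v}) : Prop :=
  ∃ S : Set C, Small.{v} S ∧ IsGeneratingSet C S ∧ ∀ X ∈ S, KPresentable κ X

variable {C}

/-- The quotient object `B/A` for subobjects `A ≤ B` of `X`. -/
noncomputable def subQuot [Abelian C] {X : C} (A B : Subobject X) (h : A ≤ B) : C :=
  cokernel (Subobject.ofLE A B h)

/-- A filtration of an object `X`: a well-ordered continuous chain of subobjects starting
at `0` and ending at `X`. (At limit ordinals `μ ≤ len`, the value is the direct union,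
i.e. the least upper bound, of the earlier values.) -/
structure Filtration [Abelian C] (X : C) where
  len : Ordinal.{v}
  toFun : Ordinal.{v} → Subobject X
  monotone : Monotone toFun
  map_zero : toFun 0 = ⊥
  map_len : toFun len = ⊤
  isLUB_of_isLimit : ∀ μ : Ordinal.{v}, Order.IsSuccLimit μ → μ ≤ len →
    IsLUB (toFun '' Set.Iio μ) (toFun μ)

/-- The consecutive quotient `X_{α+1}/X_α` of a filtration. -/
noncomputable def Filtration.quot [Abelian C] {X : C} (F : Filtration X)
    (α : Ordinal.{v}) : C :=
  subQuot (F.toFun α) (F.toFun (α + 1)) (F.monotone (le_self_add (a := α) (b := 1)))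

/-- The filtration is an `S`-filtration: all consecutive quotients lie in `S` (up to
isomorphism). -/
def Filtration.Fits [Abelian C] {X : C} (F : Filtration X) (S : Set C) : Prop :=
  ∀ α, α < F.len → ∃ s ∈ S, Nonempty (F.quot α ≅ s)

variable (C)

/-- The class of `S`-filtered objects. -/
def Filt [Abelian C] (S : Set C) : Set C := {X | ∃ F : Filtration X, F.Fits S}

/-- A class is deconstructible if it is `Filt S` for a *set* `S` of objects. -/
def Deconstructible [Abelian C] (F : Set C) : Prop :=
  ∃ S : Set C, Small.{v} S ∧ F = Filt C S

variable {C}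

/-- `Ext¹(A, B) = 0`, expressed by the splitting of all short exact sequences
`0 → B → E → A → 0`. -/
def ext1Zero [Abelian C] (A B : C) : Prop :=
  ∀ (E : C) (i : B ⟶ E) (p : E ⟶ A) (w : i ≫ p = 0),
    (ShortComplex.mk i p w).ShortExact → ∃ r : E ⟶ B, i ≫ r = 𝟙 B

/-- `κ`-Kaplansky class. -/
def IsKaplansky [Abelian C] (κ : Cardinal.{v}) (F : Set C) : Prop :=
  ∀ Fo ∈ F, ∀ X : Subobject Fo, KGenerated κ (X : C) →
    ∃ Y : Subobject Fo, X ≤ Y ∧ KPresentable κ (Y : C) ∧ (Y : C) ∈ F ∧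
      cokernel Y.arrow ∈ F

end Defs




section Statements

variable {C : Type u} [Category.{v} C]

variable [Abelian C] [HasColimits C] [HasLimits C] [WellPowered.{v} C] [AB5 C] [HasSeparator C]

noncomputable instance instCompleteLatticeSubobjectV (X : C) : CompleteLattice (Subobject X) :=
  Subobject.instCompleteLattice.{v}

/-- `ℓ(S) = Σ_{α ∈ S} A_α`. -/
noncomputable def hillEll {X : C} {σ : Ordinal.{v}} (A : ↥(Set.Iio σ) → Subobject X)
    (S : Set ↥(Set.Iio σ)) : Subobject X :=
  ⨆ α ∈ S, A α

/-- `S ⊆ σ` is closed: every `α ∈ S` satisfies `X_α ∩ A_α ⊆ Σ_{γ ∈ S, γ < α} A_γ`. -/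
def HillClosed {X : C} {σ : Ordinal.{v}} (Xc : Ordinal.{v} → Subobject X)
    (A : ↥(Set.Iio σ) → Subobject X) (S : Set ↥(Set.Iio σ)) : Prop :=
  ∀ α ∈ S, Xc α ⊓ A α ≤ ⨆ γ ∈ {γ ∈ S | (γ : Ordinal.{v}) < (α : Ordinal.{v})}, A γ

end Statements

end Paper

def UpperContinuous (L : Type*) [CompleteLattice L] : Prop :=
  ∀ s : Set L, DirectedOn (· ≤ ·) s → ∀ a : L, sSup s ⊓ a ≤ ⨆ b ∈ s, b ⊓ a

section Hill

open Set

variable {L : Type*} [CompleteLattice L] {ι : Type*} [LinearOrder ι] {X A : ι → L} {S : Set ι}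

/-- `S ∩ T` is the directed union of the `S ∩ Iic δ`, `δ ∈ T`. -/
lemma UpperContinuous.biSup_inter_inf_le (hL : UpperContinuous L) (T : Set ι) (a : L) :
    (⨆ γ ∈ S ∩ T, A γ) ⊓ a ≤ ⨆ δ ∈ T, (⨆ γ ∈ S ∩ Iic δ, A γ) ⊓ a := by
  have hmono : Monotone fun δ => ⨆ γ ∈ S ∩ Iic δ, A γ :=
    fun δ δ' h => biSup_mono fun γ hγ => ⟨hγ.1, hγ.2.trans h⟩
  calc (⨆ γ ∈ S ∩ T, A γ) ⊓ a
      ≤ sSup ((fun δ => ⨆ γ ∈ S ∩ Iic δ, A γ) '' T) ⊓ a := by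
        refine inf_le_inf_right _ (iSup₂_le fun γ h => ?_)
        rw [sSup_image]
        exact le_iSup₂_of_le (f := fun δ _ => ⨆ γ ∈ S ∩ Iic δ, A γ) γ h.2
          (le_biSup A ⟨h.1, le_rfl⟩)
    _ ≤ ⨆ δ ∈ T, (⨆ γ ∈ S ∩ Iic δ, A γ) ⊓ a := by
        rw [← iSup_image (g := (· ⊓ a))]
        exact hL _ (hmono.isChain_image (isChain_of_trichotomous T)).directedOn a

variable [IsModularLattice L]

lemma biSup_inter_Iic_inf_le (hAX : ∀ γ β, γ < β → A γ ≤ X β)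
    (hS : ∀ α ∈ S, X α ⊓ A α ≤ ⨆ γ ∈ S ∩ Iio α, A γ) (δ : ι) :
    (⨆ γ ∈ S ∩ Iic δ, A γ) ⊓ X δ ≤ ⨆ γ ∈ S ∩ Iio δ, A γ := by
  by_cases hδ : δ ∈ S
  · have hsplit : ⨆ γ ∈ S ∩ Iic δ, A γ ≤ (⨆ γ ∈ S ∩ Iio δ, A γ) ⊔ A δ :=
      iSup₂_le fun γ ⟨hγS, hγδ⟩ => hγδ.lt_or_eq.elim
        (fun h => le_sup_of_le_left (le_biSup A ⟨hγS, h⟩)) (fun h => h ▸ le_sup_right)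
    have hlt : ⨆ γ ∈ S ∩ Iio δ, A γ ≤ X δ := iSup₂_le fun γ h => hAX γ δ h.2
    calc (⨆ γ ∈ S ∩ Iic δ, A γ) ⊓ X δ
        ≤ ((⨆ γ ∈ S ∩ Iio δ, A γ) ⊔ A δ) ⊓ X δ := inf_le_inf_right _ hsplit
      _ = (⨆ γ ∈ S ∩ Iio δ, A γ) ⊔ A δ ⊓ X δ := sup_inf_assoc_of_le _ hlt
      _ ≤ ⨆ γ ∈ S ∩ Iio δ, A γ := sup_le le_rfl (inf_comm (A δ) _ ▸ hS δ hδ)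
  · exact inf_le_left.trans <| biSup_mono fun γ ⟨hγS, hγδ⟩ =>
      ⟨hγS, hγδ.lt_of_ne (by rintro rfl; exact hδ hγS)⟩

variable [WellFoundedLT ι]

lemma biSup_inter_Iic_inf_le_of_upperContinuous (hL : UpperContinuous L) (hX : Monotone X)
    (hAX : ∀ γ β, γ < β → A γ ≤ X β)
    (hS : ∀ α ∈ S, X α ⊓ A α ≤ ⨆ γ ∈ S ∩ Iio α, A γ) (δ β : ι) :
    (⨆ γ ∈ S ∩ Iic δ, A γ) ⊓ X β ≤ ⨆ γ ∈ S ∩ Iio β, A γ := by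
  induction δ using WellFoundedLT.induction with
  | _ δ ih =>
  rcases lt_or_ge δ β with hδβ | hβδ
  · exact inf_le_left.trans (biSup_mono fun γ h => ⟨h.1, h.2.trans_lt hδβ⟩)
  calc (⨆ γ ∈ S ∩ Iic δ, A γ) ⊓ X β
      ≤ ((⨆ γ ∈ S ∩ Iic δ, A γ) ⊓ X δ) ⊓ X β :=
        le_inf (inf_le_inf_left _ (hX hβδ)) inf_le_right
    _ ≤ (⨆ γ ∈ S ∩ Iio δ, A γ) ⊓ X β :=
        inf_le_inf_right _ (biSup_inter_Iic_inf_le hAX hS δ)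
    _ ≤ ⨆ δ' ∈ Iio δ, (⨆ γ ∈ S ∩ Iic δ', A γ) ⊓ X β := hL.biSup_inter_inf_le _ _
    _ ≤ ⨆ γ ∈ S ∩ Iio β, A γ := iSup₂_le ih

theorem biSup_inf_eq_biSup_inter_Iio (hL : UpperContinuous L) (hX : Monotone X)
    (hAX : ∀ γ β, γ < β → A γ ≤ X β)
    (hS : ∀ α ∈ S, X α ⊓ A α ≤ ⨆ γ ∈ S ∩ Iio α, A γ) (β : ι) :
    (⨆ γ ∈ S, A γ) ⊓ X β = ⨆ γ ∈ S ∩ Iio β, A γ := by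
  refine le_antisymm ?_ (le_inf (biSup_mono fun γ h => h.1) (iSup₂_le fun γ h => hAX γ β h.2))
  calc (⨆ γ ∈ S, A γ) ⊓ X β
      ≤ ⨆ δ ∈ univ, (⨆ γ ∈ S ∩ Iic δ, A γ) ⊓ X β := by
        simpa only [inter_univ] using hL.biSup_inter_inf_le (S := S) (A := A) univ (X β)
    _ ≤ ⨆ γ ∈ S ∩ Iio β, A γ :=
        iSup₂_le fun δ _ => biSup_inter_Iic_inf_le_of_upperContinuous hL hX hAX hS δ β

end Hill

namespace CategoryTheory.Subobject

variable {C : Type u} [Category.{v} C] [Abelian C] {X : C}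

lemma factors_iff_comp_cokernel_π_eq_zero (P : Subobject X) {A : C} (f : A ⟶ X) :
    P.Factors f ↔ f ≫ cokernel.π P.arrow = 0 :=
  ⟨fun h => by rw [← P.factorThru_arrow f h, Category.assoc, cokernel.condition, comp_zero],
    fun h => (factors_iff _ _).mpr
      ⟨Abelian.monoLift P.arrow f h, Abelian.monoLift_comp _ _ h⟩⟩

lemma factors_of_epi_comp {P : Subobject X} {A A' : C} (e : A' ⟶ A) [Epi e] {f : A ⟶ X}
    (h : P.Factors (e ≫ f)) : P.Factors f := by
  rw [factors_iff_comp_cokernel_π_eq_zero] at h ⊢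
  exact (cancel_epi e).mp (by rw [← Category.assoc, h, comp_zero])

lemma sup_eq_imageSubobject_biprod_desc (W Z : Subobject X) :
    W ⊔ Z = imageSubobject (biprod.desc W.arrow Z.arrow) := by
  have hW := imageSubobject_factors_comp_self (biprod.desc W.arrow Z.arrow) biprod.inl
  have hZ := imageSubobject_factors_comp_self (biprod.desc W.arrow Z.arrow) biprod.inr
  rw [biprod.inl_desc] at hW
  rw [biprod.inr_desc] at hZ
  refine le_antisymm (sup_le (le_of_factors hW) (le_of_factors hZ)) ?_
  exact imageSubobject_le _ (biprod.desc (ofLE _ _ le_sup_left) (ofLE _ _ le_sup_right))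
    (by ext <;> simp)

lemma exists_epi_comp_eq_add_of_factors_sup {W Z : Subobject X} {A : C} {f : A ⟶ X}
    (hf : (W ⊔ Z).Factors f) :
    ∃ (A' : C) (e : A' ⟶ A) (_ : Epi e) (a b : A' ⟶ X),
      W.Factors a ∧ Z.Factors b ∧ e ≫ f = a + b := by
  rw [sup_eq_imageSubobject_biprod_desc] at hf
  obtain ⟨A', e, he, c, hc⟩ := surjective_up_to_refinements_of_epi
    (factorThruImageSubobject (biprod.desc W.arrow Z.arrow)) (factorThru _ f hf)
  refine ⟨A', e, he, c ≫ biprod.fst ≫ W.arrow, c ≫ biprod.snd ≫ Z.arrow,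
    factors_of_factors_right _ (factors_comp_arrow _),
    factors_of_factors_right _ (factors_comp_arrow _), ?_⟩
  have hfac := hc =≫ (imageSubobject (biprod.desc W.arrow Z.arrow)).arrow
  simp only [Category.assoc, factorThru_arrow, imageSubobject_arrow_comp] at hfac
  rw [hfac, biprod.desc_eq, Preadditive.comp_add]

instance : IsModularLattice (Subobject X) where
  sup_inf_le_assoc_of_le {W} Z {Y} hWY := by
    set T := (W ⊔ Z) ⊓ Y
    obtain ⟨A', e, _, a, b, ha, hb, hab⟩ := exists_epi_comp_eq_add_of_factors_sup
      (factors_of_le T.arrow _root_.inf_le_left (factors_self T))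
    have hbY : Y.Factors b := factors_right_of_factors_add a b
      (hab ▸ factors_of_factors_right e (factors_of_le _ _root_.inf_le_right (factors_self T)))
      (factors_of_le a hWY ha)
    refine le_of_factors (factors_of_epi_comp e (hab ▸ factors_add a b ?_ ?_))
    · exact factors_of_le a le_sup_left ha
    · exact factors_of_le b le_sup_right ((inf_factors b).mpr ⟨hb, hbY⟩)

lemma factors_of_isColimit {J : Type*} [Category J] {D : J ⥤ C} {c : Cocone D}
    (hc : IsColimit c) {P : Subobject X} {f : c.pt ⟶ X} (h : ∀ j, P.Factors (c.ι.app j ≫ f)) :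
    P.Factors f := by
  simp only [factors_iff_comp_cokernel_π_eq_zero] at h ⊢
  exact hc.hom_ext fun j => by simpa using h j

variable [HasColimits C] [HasLimits C] [WellPowered.{v} C] [AB5 C]

attribute [local instance] IsFiltered.isConnected

/-- By AB5 the colimit of the kernels of `F j → X → X/Y` is the kernel of `colim F → X/Y`. -/
lemma iSup_inf_le_iSup_inf_of_monotone {J : Type v} [Preorder J] [IsDirected J (· ≤ ·)]
    [Nonempty J] {F : J → Subobject X} (hF : Monotone F) (Y : Subobject X) :
    (⨆ j, F j) ⊓ Y ≤ ⨆ j, F j ⊓ Y := by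
  let D : J ⥤ C := hF.functor ⋙ underlying
  let ν : D ⟶ (Functor.const J).obj X :=
    { app j := (F j).arrow
      naturality _ _ f := by simpa [D] using underlying_arrow (hF.functor.map f) }
  let μ := ν ≫ (Functor.const J).map (cokernel.π Y.arrow)
  let t : colimit D ⟶ X := colimit.desc D ⟨X, ν⟩
  have : ∀ j, Mono (ν.app j) := fun j => arrow_mono (F j)
  have : Mono ν := NatTrans.mono_of_mono_app ν
  have : Mono t := colim.map_mono' ν (colimit.isColimit D) (isColimitConstCocone J X) t
    fun j => (colimit.ι_desc _ j).trans (Category.comp_id _).symm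
  have hexact : (ShortComplex.mk (colim.map (kernel.ι μ)) (t ≫ cokernel.π Y.arrow) _).Exact :=
    colim.exact_mapShortComplex (ShortComplex.kernelSequence_exact μ)
      (colimit.isColimit _) (colimit.isColimit D) (isColimitConstCocone J (cokernel Y.arrow))
      _ _ (fun j => colimit.ι_map _ j)
      (fun j => (colimit.ι_desc_assoc _ j _).trans (Category.comp_id _).symm)
  have hleg (j : J) : colimit.ι (kernel μ) j ≫ colim.map (kernel.ι μ) ≫ t =
      (kernel.ι μ).app j ≫ (F j).arrow :=
    (colimit.ι_map_assoc _ _ _).trans (congrArg _ (colimit.ι_desc _ j))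
  have hle : (⨆ j, F j) ⊓ Y ≤ mk t := _root_.inf_le_left.trans
    (iSup_le fun j => le_mk_of_comm (colimit.ι D j) (colimit.ι_desc _ _))
  let x₂ := ofLEMk _ t hle
  have hx₂ : x₂ ≫ t = ((⨆ j, F j) ⊓ Y).arrow := ofLEMk_comp hle
  obtain ⟨A', e, _, x, hx⟩ := hexact.exact_up_to_refinements x₂ <| by
    rw [← Category.assoc, hx₂, ← factors_iff_comp_cokernel_π_eq_zero]
    exact factors_of_le _ _root_.inf_le_right (factors_self _)
  refine le_of_factors (factors_of_epi_comp e ?_)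
  rw [← hx₂, ← Category.assoc, hx, Category.assoc]
  refine factors_of_factors_right x (factors_of_isColimit (colimit.isColimit _) fun j => ?_)
  refine (hleg j).symm ▸ factors_of_le _ (le_iSup (fun j => F j ⊓ Y) j)
    ((inf_factors _).mpr ⟨factors_of_factors_right _ (factors_self _), ?_⟩)
  rw [factors_iff_comp_cokernel_π_eq_zero]
  exact (Category.assoc _ _ _).trans (congrArg (fun φ => NatTrans.app φ j) (kernel.condition μ))

lemma upperContinuous : UpperContinuous (Subobject X) := by
  intro s hs Y
  rcases s.eq_empty_or_nonempty with rfl | ⟨b, hb⟩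
  · rw [sSup_empty, bot_inf_eq]
    exact bot_le
  have : Small.{v} s := small_subtype _ _
  have : Nonempty (Shrink.{v} s) := ⟨equivShrink s ⟨b, hb⟩⟩
  have : IsDirected (Shrink.{v} s) (· ≤ ·) := ⟨fun i j => by
    obtain ⟨c, hc, hic, hjc⟩ :=
      hs _ ((equivShrink s).symm i).2 _ ((equivShrink s).symm j).2
    refine ⟨equivShrink s ⟨c, hc⟩, ?_, ?_⟩ <;>
      rw [← (orderIsoShrink s).symm.le_iff_le, orderIsoShrink_symm_apply,
        orderIsoShrink_symm_apply, Equiv.symm_apply_apply]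
    exacts [hic, hjc]⟩
  rw [sSup_eq_iSup', ← (equivShrink s).symm.iSup_comp]
  exact (iSup_inf_le_iSup_inf_of_monotone (F := fun j => ((equivShrink s).symm j : Subobject X))
    (fun _ _ h => h) Y).trans (iSup_le fun j => le_biSup (· ⊓ Y) ((equivShrink s).symm j).2)

end CategoryTheory.Subobject

namespace Paper

section Statements

variable {C : Type u} [Category.{v} C]

variable [Abelian C] [HasColimits C] [HasLimits C] [WellPowered.{v} C] [AB5 C] [HasSeparator C]

variable (κ : Cardinal.{v}) (X : C) (σ : Ordinal.{v})
  (Xc : Ordinal.{v} → Subobject X) (A : ↥(Set.Iio σ) → Subobject X)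

theorem statement4
    (hmono : Monotone Xc)
    (hA : ∀ α : ↥(Set.Iio σ), Xc ((α : Ordinal.{v}) + 1) = Xc α ⊔ A α)
    (S : Set ↥(Set.Iio σ)) (hS : HillClosed Xc A S)
    (α : Ordinal.{v}) (hα : α < σ) :
    hillEll A S ⊓ Xc α = hillEll A {γ ∈ S | (γ : Ordinal.{v}) < α} := by
  have hAX (γ β : Set.Iio σ) (h : γ < β) : A γ ≤ Xc β :=
    le_sup_right.trans_eq (hA γ).symm |>.trans (hmono (Order.add_one_le_of_lt h))
  exact biSup_inf_eq_biSup_inter_Iio (X := fun γ : Set.Iio σ => Xc γ)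
    Subobject.upperContinuous (hmono.comp fun _ _ h => h) hAX hS ⟨α, hα⟩

end Statements

end Paper
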